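/- Let H = (V,E) be a finite linear hypergraph with n = |V| vertices in which every hyperedge has at least 2 vertices, and suppose E can be partitioned as E = E' ⊔ E'' such that: (i) every hyperedge e ∈ E' has |e| ≥ √n (i.e. |e|² ≥ n); (ii) every hyperedge e ∈ E'' has |e| < √n (i.e. |e|² < n); (iii) every hyperedge e ∈ E'' contains a vertex x₀ with deg_H(x₀) ≤ |e|, where deg_H is the degree in the whole hypergraph H. Then the chromatic index of H satisfies q(H) ≤ Δ([H]_2) + 1. -/

import Mathlib

open Finset

variable {V : Type*}

/-- The degree of a vertex `x`: number of hyperedges containing `x`. -/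
def hyperDeg [DecidableEq V] (E : Finset (Finset V)) (x : V) : ℕ :=
  (E.filter fun e => x ∈ e).card

/-- A hypergraph is linear if two distinct hyperedges share at most one vertex. -/
def Linear [DecidableEq V] (E : Finset (Finset V)) : Prop :=
  ∀ e ∈ E, ∀ f ∈ E, e ≠ f → (e ∩ f).card ≤ 1

/-- The degree of a hyperedge `e`: number of other hyperedges meeting `e`. -/
def edgeDeg [DecidableEq V] (E : Finset (Finset V)) (e : Finset V) : ℕ :=
  (E.filter fun a => a ≠ e ∧ (a ∩ e).Nonempty).card

/-- Degree of a vertex in the 2-section of the hypergraph. -/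
def deg2 [Fintype V] [DecidableEq V] (E : Finset (Finset V)) (x : V) : ℕ :=
  (Finset.univ.filter fun y => y ≠ x ∧ ∃ e ∈ E, x ∈ e ∧ y ∈ e).card

/-- Maximum degree of the 2-section. -/
def maxDeg2 [Fintype V] [DecidableEq V] (E : Finset (Finset V)) : ℕ :=
  Finset.univ.sup (deg2 E)

/-- Minimum degree of the 2-section. -/
noncomputable def minDeg2 [Fintype V] [DecidableEq V] (E : Finset (Finset V)) : ℕ :=
  sInf (Set.range (deg2 E))

/-- Maximum vertex degree of the hypergraph. -/
def maxDeg [Fintype V] [DecidableEq V] (E : Finset (Finset V)) : ℕ :=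
  Finset.univ.sup (hyperDeg E)

/-- A proper hyperedge coloring with `q` colors. -/
def ColorableWith [DecidableEq V] (E : Finset (Finset V)) (q : ℕ) : Prop :=
  ∃ c : Finset V → Fin q, ∀ e ∈ E, ∀ f ∈ E, e ≠ f → (e ∩ f).Nonempty → c e ≠ c f

/-- The chromatic index: least number of colors in a proper hyperedge coloring. -/
noncomputable def chromIndex [DecidableEq V] (E : Finset (Finset V)) : ℕ :=
  sInf {q | ColorableWith E q}

/-!
Colour the edges greedily by decreasing size. When `e` is coloured, its coloured neighbours are
among the edges of size at least `|e|` meeting `e`; by linearity these split into the stars at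
the points `x ∈ e`, and the star at `x` holds at most `deg₂(x) / (|e| - 1) - 1` of them, which
sums to at most `Δ = Δ([H]₂)` unless almost every estimate is tight. For `e ∈ E''` the vertex of
small degree gives the missing slack. If some edge `r` still has more than `Δ` such neighbours,
then `|r|² ≥ n` forces equality everywhere: `n = k²` and `Δ = k² - 1` for `k = |r|`, and every
point of `r` lies on exactly `k + 1` edges, all of size `k`, covering `V`, as in an affine plane
of order `k`. Then no edge is larger than `k` and an edge of size `k` has at most `k² = Δ + 1`
large neighbours. Giving one colour to two disjoint edges meeting `r` and then colouring the edges
of size `k` disjoint from `r`, those meeting `r`, `r` itself and finally the smaller edges, each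
edge of size `k` sees either this repeated colour or an uncoloured large neighbour.
-/

theorem card_image_lt_of_subset {α γ : Type*} [DecidableEq α] [DecidableEq γ]
    {B N P : Finset α} {c : α → γ} {c₀ : γ} (hcP : ∀ p ∈ P, c p = c₀) (hBN : B ⊆ N) {q : ℕ}
    (h : #N < q ∨ (#N ≤ q ∧ 1 < #(N ∩ P))) : #(B.image c) < q := by
  rcases h with hlt | ⟨hle, hNP⟩
  · exact (card_image_le.trans (card_le_card hBN)).trans_lt hlt
  -- all of `P` shares one colour, so at least one colour is saved on `N ∩ P`
  have hsub : B.image c ⊆ insert c₀ ((B \ P).image c) := by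
    intro col hcol
    obtain ⟨g, hg, rfl⟩ := mem_image.1 hcol
    by_cases hgP : g ∈ P
    · rw [hcP g hgP]; exact mem_insert_self _ _
    · exact mem_insert_of_mem (mem_image_of_mem c (mem_sdiff.2 ⟨hg, hgP⟩))
  have hsplit := card_sdiff_add_card_inter N P
  calc #(B.image c) ≤ #((B \ P).image c) + 1 := (card_le_card hsub).trans (card_insert_le _ _)
    _ ≤ #(N \ P) + 1 := by
      gcongr; exact card_image_le.trans (card_le_card (sdiff_subset_sdiff hBN le_rfl))
    _ < q := by omega

namespace SimpleGraph

variable {α β γ : Type*} [DecidableEq α] (G : SimpleGraph α)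

theorem update_ne_update_of_adj {t : Finset α} {c : α → γ}
    (hc : ∀ a ∈ t, ∀ b ∈ t, G.Adj a b → c a ≠ c b) {e : α} {col : γ}
    (hcol : ∀ b ∈ t, G.Adj b e → c b ≠ col) :
    ∀ a ∈ insert e t, ∀ b ∈ insert e t, G.Adj a b →
      Function.update c e col a ≠ Function.update c e col b := by
  intro a ha b hb hab
  rcases eq_or_ne a e with rfl | hae
  · have hba := (G.ne_of_adj hab).symm
    rw [Function.update_self, Function.update_of_ne hba]
    exact (hcol b ((mem_insert.1 hb).resolve_left hba) hab.symm).symm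
  rcases eq_or_ne b e with rfl | hbe
  · rw [Function.update_self, Function.update_of_ne hae]
    exact hcol a ((mem_insert.1 ha).resolve_left hae) hab
  rw [Function.update_of_ne hae, Function.update_of_ne hbe]
  exact hc a ((mem_insert.1 ha).resolve_left hae) b ((mem_insert.1 hb).resolve_left hbe) hab

variable [LinearOrder β] [DecidableRel G.Adj]

/-- The greedy colouring gives all of `P` one colour and then colours the rest of `s` by
decreasing `key`; these are the neighbours of `e` that may be coloured before `e`. -/
def earlierNeighbors (s P : Finset α) (key : α → β) (e : α) : Finset α :=
  {g ∈ s | G.Adj g e ∧ (key e ≤ key g ∨ g ∈ P)}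

theorem exists_coloring_of_earlierNeighbors {s P : Finset α} (hPs : P ⊆ s)
    (hP : ∀ a ∈ P, ∀ b ∈ P, ¬ G.Adj a b) (key : α → β) {q : ℕ} (hq : 0 < q)
    (h : ∀ e ∈ s \ P, #(G.earlierNeighbors s P key e) < q ∨
      (#(G.earlierNeighbors s P key e) ≤ q ∧ 1 < #(G.earlierNeighbors s P key e ∩ P))) :
    ∃ c : α → Fin q, ∀ a ∈ s, ∀ b ∈ s, G.Adj a b → c a ≠ c b := by
  have extend : ∀ S ⊆ s \ P, ∃ c : α → Fin q, (∀ p ∈ P, c p = ⟨0, hq⟩) ∧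
      ∀ a ∈ S ∪ P, ∀ b ∈ S ∪ P, G.Adj a b → c a ≠ c b := by
    intro S
    induction S using Finset.induction_on_min_value key with
    | empty =>
      refine fun _ => ⟨fun _ => ⟨0, hq⟩, fun _ _ => rfl, fun a ha b hb hab => ?_⟩
      rw [empty_union] at ha hb
      exact absurd hab (hP a ha b hb)
    | insert e S heS hmin ih =>
      intro hS
      obtain ⟨hes, heP⟩ := mem_sdiff.1 (hS (mem_insert_self e S))
      obtain ⟨c, hcP, hc⟩ := ih ((subset_insert e S).trans hS)
      set B := {g ∈ S ∪ P | G.Adj g e}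
      have hBN : B ⊆ G.earlierNeighbors s P key e := by
        intro g hg
        obtain ⟨hgSP, hge⟩ := mem_filter.1 hg
        rcases mem_union.1 hgSP with hgS | hgP
        · exact mem_filter.2 ⟨(mem_sdiff.1 (hS (mem_insert_of_mem hgS))).1, hge, .inl (hmin g hgS)⟩
        · exact mem_filter.2 ⟨hPs hgP, hge, .inr hgP⟩
      obtain ⟨col, -, hcol⟩ := exists_mem_notMem_of_card_lt_card (s := B.image c) (t := univ)
        (by rw [card_univ, Fintype.card_fin]
            exact card_image_lt_of_subset hcP hBN (h e (mem_sdiff.2 ⟨hes, heP⟩)))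
      refine ⟨Function.update c e col, fun p hp => ?_, ?_⟩
      · rw [Function.update_of_ne (ne_of_mem_of_not_mem hp heP)]; exact hcP p hp
      rw [insert_union]
      exact G.update_ne_update_of_adj hc fun b hb hbe hcb =>
        hcol (hcb ▸ mem_image_of_mem c (mem_filter.2 ⟨hb, hbe⟩))
  obtain ⟨c, -, hc⟩ := extend (s \ P) subset_rfl
  have hs : s ⊆ s \ P ∪ P := by rw [sdiff_union_of_subset hPs]
  exact ⟨c, fun a ha b hb => hc a (hs ha) b (hs hb)⟩

theorem card_earlierNeighbors_lt_or {s P T : Finset α} (hPs : P ⊆ s) {key : α → β}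
    {e : α} {q : ℕ} (hNT : G.earlierNeighbors s P key e ⊆ T) (hTq : #T ≤ q)
    (h : (∃ g ∈ T, g ∉ P ∧ key g < key e) ∨
      ∃ a ∈ P, ∃ b ∈ P, a ≠ b ∧ G.Adj a e ∧ G.Adj b e) :
    #(G.earlierNeighbors s P key e) < q ∨
      (#(G.earlierNeighbors s P key e) ≤ q ∧ 1 < #(G.earlierNeighbors s P key e ∩ P)) := by
  rcases h with ⟨g, hgT, hgP, hlt⟩ | ⟨a, ha, b, hb, hab, hae, hbe⟩
  · refine .inl ((card_lt_card ((ssubset_iff_of_subset hNT).2 ⟨g, hgT, fun hg => ?_⟩)).trans_le hTq)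
    obtain ⟨-, -, hle | hgP'⟩ := mem_filter.1 hg
    exacts [hle.not_gt hlt, hgP hgP']
  · exact .inr ⟨(card_le_card hNT).trans hTq, one_lt_card.2
      ⟨a, mem_inter.2 ⟨mem_filter.2 ⟨hPs ha, hae, .inr ha⟩, ha⟩,
        b, mem_inter.2 ⟨mem_filter.2 ⟨hPs hb, hbe, .inr hb⟩, hb⟩, hab⟩⟩

end SimpleGraph

def intersectionGraph (V : Type*) [DecidableEq V] : SimpleGraph (Finset V) where
  Adj s t := s ≠ t ∧ (s ∩ t).Nonempty
  symm := ⟨fun _ _ h => ⟨h.1.symm, by rw [inter_comm]; exact h.2⟩⟩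
  loopless := ⟨fun _ h => h.1 rfl⟩

@[simp]
theorem intersectionGraph_adj [DecidableEq V] {s t : Finset V} :
    (intersectionGraph V).Adj s t ↔ s ≠ t ∧ (s ∩ t).Nonempty :=
  Iff.rfl

instance [DecidableEq V] : DecidableRel (intersectionGraph V).Adj :=
  fun _ _ => decidable_of_iff' _ intersectionGraph_adj

section Hypergraph

variable [DecidableEq V] {E : Finset (Finset V)} {r : Finset V}

theorem colorableWith_iff {q : ℕ} : ColorableWith E q ↔
    ∃ c : Finset V → Fin q, ∀ a ∈ E, ∀ b ∈ E, (intersectionGraph V).Adj a b → c a ≠ c b :=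
  ⟨fun ⟨c, hc⟩ => ⟨c, fun a ha b hb hab =>
      hc a ha b hb (intersectionGraph_adj.1 hab).1 (intersectionGraph_adj.1 hab).2⟩,
    fun ⟨c, hc⟩ => ⟨c, fun a ha b hb hne hab => hc a ha b hb ⟨hne, hab⟩⟩⟩

def largeNeighbors (E : Finset (Finset V)) (e : Finset V) : Finset (Finset V) :=
  {g ∈ E | (intersectionGraph V).Adj g e ∧ e.card ≤ g.card}

def largeNeighborsThrough (E : Finset (Finset V)) (e : Finset V) (x : V) : Finset (Finset V) :=
  {g ∈ E | x ∈ g ∧ g ≠ e ∧ e.card ≤ g.card}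

theorem earlierNeighbors_subset_largeNeighbors {β : Type*} [LinearOrder β] {P : Finset (Finset V)}
    {key : Finset V → β} {e : Finset V} (hkey : ∀ g, key e ≤ key g → e.card ≤ g.card)
    (hP : ∀ g ∈ P, e.card ≤ g.card) :
    (intersectionGraph V).earlierNeighbors E P key e ⊆ largeNeighbors E e := by
  intro g hg
  obtain ⟨hgE, hadj, hle | hgP⟩ := mem_filter.1 hg
  exacts [mem_filter.2 ⟨hgE, hadj, hkey g hle⟩, mem_filter.2 ⟨hgE, hadj, hP g hgP⟩]

theorem colorableWith_succ_of_card_largeNeighbors_le {d : ℕ}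
    (h : ∀ e ∈ E, #(largeNeighbors E e) ≤ d) : ColorableWith E (d + 1) := by
  rw [colorableWith_iff]
  refine (intersectionGraph V).exists_coloring_of_earlierNeighbors (empty_subset E) (by simp)
    card d.succ_pos fun e he => .inl ?_
  rw [sdiff_empty] at he
  exact Nat.lt_succ_of_le ((card_le_card (earlierNeighbors_subset_largeNeighbors
    (fun _ h => h) (by simp))).trans (h e he))

theorem Linear.eq_of_mem_of_mem (hlin : Linear E) {e f : Finset V} (he : e ∈ E) (hf : f ∈ E)
    {x y : V} (hxy : x ≠ y) (hxe : x ∈ e) (hye : y ∈ e) (hxf : x ∈ f) (hyf : y ∈ f) : e = f := by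
  by_contra hne
  exact hxy (card_le_one.1 (hlin e he f hf hne) x (mem_inter.2 ⟨hxe, hxf⟩) y
    (mem_inter.2 ⟨hye, hyf⟩))

theorem Linear.card_largeNeighbors (hlin : Linear E) {e : Finset V} (he : e ∈ E) :
    #(largeNeighbors E e) = ∑ x ∈ e, #(largeNeighborsThrough E e x) := by
  have hunion : largeNeighbors E e = e.biUnion (largeNeighborsThrough E e) := by
    ext g
    simp only [largeNeighbors, largeNeighborsThrough, intersectionGraph_adj, mem_filter,
      mem_biUnion, Finset.Nonempty, mem_inter]
    constructor
    · rintro ⟨hgE, ⟨hge, x, hxg, hxe⟩, hcard⟩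
      exact ⟨x, hxe, hgE, hxg, hge, hcard⟩
    · rintro ⟨x, hxe, hgE, hxg, hge, hcard⟩
      exact ⟨hgE, ⟨hge, x, hxg, hxe⟩, hcard⟩
  rw [hunion, card_biUnion]
  intro x hx y hy hxy
  refine disjoint_left.2 fun g hgx hgy => ?_
  obtain ⟨hgE, hxg, hge, -⟩ := mem_filter.1 hgx
  exact hge (hlin.eq_of_mem_of_mem hgE he hxy hxg (mem_filter.1 hgy).2.1 hx hy)

theorem Linear.card_filter_mem_inter_nonempty_le (hlin : Linear E) {f : Finset V} {x : V}
    (hx : x ∉ f) : #{g ∈ E | x ∈ g ∧ (g ∩ f).Nonempty} ≤ f.card := by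
  calc #{g ∈ E | x ∈ g ∧ (g ∩ f).Nonempty}
      ≤ #(f.biUnion fun w => {g ∈ E | x ∈ g ∧ w ∈ g}) := by
        refine card_le_card fun g hg => ?_
        obtain ⟨hgE, hxg, w, hw⟩ := mem_filter.1 hg
        exact mem_biUnion.2 ⟨w, (mem_inter.1 hw).2, mem_filter.2 ⟨hgE, hxg, (mem_inter.1 hw).1⟩⟩
    _ ≤ ∑ w ∈ f, #{g ∈ E | x ∈ g ∧ w ∈ g} := card_biUnion_le
    _ ≤ ∑ w ∈ f, 1 := sum_le_sum fun w hw => card_le_one.2 fun a ha b hb => by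
        obtain ⟨haE, hxa, hwa⟩ := mem_filter.1 ha
        obtain ⟨hbE, hxb, hwb⟩ := mem_filter.1 hb
        exact hlin.eq_of_mem_of_mem haE hbE (ne_of_mem_of_not_mem hw hx).symm hxa hwa hxb hwb
    _ = f.card := by rw [card_eq_sum_ones]

/-- `x` looks like a point of an affine plane of order `k`. -/
structure IsFullPencil (E : Finset (Finset V)) (k : ℕ) (x : V) : Prop where
  card_eq : ∀ g ∈ E, x ∈ g → g.card = k
  hyperDeg_eq : hyperDeg E x = k + 1
  exists_mem : ∀ y, y ≠ x → ∃ f ∈ E, x ∈ f ∧ y ∈ f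

theorem card_eq_of_isFullPencil (hpen : ∀ x ∈ r, IsFullPencil E r.card x)
    {g : Finset V} (hg : g ∈ E) (hgr : (g ∩ r).Nonempty) : g.card = r.card := by
  obtain ⟨x, hx⟩ := hgr
  exact (hpen x (mem_inter.1 hx).2).card_eq g hg (mem_inter.1 hx).1

theorem Linear.exists_disjoint_of_isFullPencil (hlin : Linear E) (hr : r ∈ E) (hr2 : 2 ≤ r.card)
    (hpen : ∀ x ∈ r, IsFullPencil E r.card x) :
    ∃ f₁ ∈ E, ∃ f₂ ∈ E, Disjoint f₁ f₂ ∧ f₁ ≠ r ∧ f₂ ≠ r ∧ (f₁ ∩ r).Nonempty ∧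
      (f₂ ∩ r).Nonempty := by
  obtain ⟨x₁, hx₁, x₂, hx₂, hx₁₂⟩ := one_lt_card.1 hr2
  obtain ⟨f₁, hf₁, hf₁r⟩ := exists_mem_ne (s := {g ∈ E | x₁ ∈ g})
    (by rw [← hyperDeg, (hpen x₁ hx₁).hyperDeg_eq]; omega) r
  obtain ⟨hf₁E, hx₁f₁⟩ := mem_filter.1 hf₁
  have hx₂f₁ : x₂ ∉ f₁ := fun h => hf₁r (hlin.eq_of_mem_of_mem hf₁E hr hx₁₂ hx₁f₁ h hx₁ hx₂)
  -- at most `#f₁ = #r` of the `#r + 1` edges through `x₂` can meet `f₁`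
  have hfew : #{g ∈ E | x₂ ∈ g ∧ (g ∩ f₁).Nonempty} < #{g ∈ E | x₂ ∈ g} := by
    rw [← hyperDeg, (hpen x₂ hx₂).hyperDeg_eq, ← (hpen x₁ hx₁).card_eq f₁ hf₁E hx₁f₁]
    exact Nat.lt_succ_of_le (hlin.card_filter_mem_inter_nonempty_le hx₂f₁)
  obtain ⟨f₂, hf₂, hf₂f₁⟩ := exists_mem_notMem_of_card_lt_card hfew
  obtain ⟨hf₂E, hx₂f₂⟩ := mem_filter.1 hf₂
  have hdisj : Disjoint f₁ f₂ := disjoint_right.2 fun y hy₂ hy₁ =>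
    hf₂f₁ (mem_filter.2 ⟨hf₂E, hx₂f₂, y, mem_inter.2 ⟨hy₂, hy₁⟩⟩)
  refine ⟨f₁, hf₁E, f₂, hf₂E, hdisj, hf₁r, ?_, ⟨x₁, mem_inter.2 ⟨hx₁f₁, hx₁⟩⟩,
    ⟨x₂, mem_inter.2 ⟨hx₂f₂, hx₂⟩⟩⟩
  rintro rfl
  exact disjoint_left.1 hdisj hx₁f₁ hx₁

theorem Linear.exists_two_meeting_of_isFullPencil (hlin : Linear E) (hr : r ∈ E)
    (hr2 : 2 ≤ r.card) (hpen : ∀ x ∈ r, IsFullPencil E r.card x) {e : Finset V}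
    (he : e.Nonempty) (her : Disjoint e r) :
    ∃ p₁ ∈ E, ∃ p₂ ∈ E, p₁ ≠ p₂ ∧ (p₁ ∩ e).Nonempty ∧ (p₂ ∩ e).Nonempty ∧
      (p₁ ∩ r).Nonempty ∧ (p₂ ∩ r).Nonempty := by
  obtain ⟨y, hy⟩ := he
  have hyr : y ∉ r := disjoint_left.1 her hy
  obtain ⟨x₁, hx₁, x₂, hx₂, hx₁₂⟩ := one_lt_card.1 hr2
  obtain ⟨p₁, hp₁, hx₁p₁, hyp₁⟩ := (hpen x₁ hx₁).exists_mem y fun h => hyr (h ▸ hx₁)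
  obtain ⟨p₂, hp₂, hx₂p₂, hyp₂⟩ := (hpen x₂ hx₂).exists_mem y fun h => hyr (h ▸ hx₂)
  refine ⟨p₁, hp₁, p₂, hp₂, ?_, ⟨y, mem_inter.2 ⟨hyp₁, hy⟩⟩, ⟨y, mem_inter.2 ⟨hyp₂, hy⟩⟩,
    ⟨x₁, mem_inter.2 ⟨hx₁p₁, hx₁⟩⟩, ⟨x₂, mem_inter.2 ⟨hx₂p₂, hx₂⟩⟩⟩
  rintro rfl
  exact hyr (hlin.eq_of_mem_of_mem hp₁ hr hx₁₂ hx₁p₁ hx₂p₂ hx₁ hx₂ ▸ hyp₁)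

end Hypergraph

section TwoSection

variable [Fintype V] [DecidableEq V] {E : Finset (Finset V)} {r : Finset V}

theorem deg2_le_maxDeg2 (E : Finset (Finset V)) (x : V) : deg2 E x ≤ maxDeg2 E :=
  le_sup (mem_univ x)

theorem filter_adj_subset_erase (E : Finset (Finset V)) (x : V) :
    (univ.filter fun y => y ≠ x ∧ ∃ e ∈ E, x ∈ e ∧ y ∈ e) ⊆ univ.erase x :=
  fun y hy => mem_erase.2 ⟨(mem_filter.1 hy).2.1, mem_univ y⟩

theorem maxDeg2_le_card_sub_one (E : Finset (Finset V)) : maxDeg2 E ≤ Fintype.card V - 1 :=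
  Finset.sup_le fun x _ => (card_le_card (filter_adj_subset_erase E x)).trans
    (by rw [card_erase_of_mem (mem_univ x), card_univ])

theorem exists_mem_mem_of_card_sub_one_le_deg2 {x : V} (hx : Fintype.card V - 1 ≤ deg2 E x)
    {y : V} (hyx : y ≠ x) : ∃ f ∈ E, x ∈ f ∧ y ∈ f := by
  have heq := eq_of_subset_of_card_le (filter_adj_subset_erase E x)
    (by rwa [card_erase_of_mem (mem_univ x), card_univ])
  exact (mem_filter.1 (heq ▸ mem_erase.2 ⟨hyx, mem_univ y⟩)).2.2

/-- The edges through `x` minus `x` itself are disjoint sets of `2`-section neighbours of `x`. -/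
theorem Linear.sum_card_sub_one_le_deg2 (hlin : Linear E) {A : Finset (Finset V)} (hAE : A ⊆ E)
    {x : V} (hA : ∀ f ∈ A, x ∈ f) : ∑ f ∈ A, (f.card - 1) ≤ deg2 E x := by
  calc ∑ f ∈ A, (f.card - 1) = #(A.biUnion fun f => f.erase x) := by
        rw [card_biUnion]
        · exact sum_congr rfl fun f hf => (card_erase_of_mem (hA f hf)).symm
        intro a ha b hb hab
        refine disjoint_left.2 fun y hya hyb => hab ?_
        exact hlin.eq_of_mem_of_mem (hAE ha) (hAE hb) (ne_of_mem_erase hya).symm (hA a ha)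
          (mem_of_mem_erase hya) (hA b hb) (mem_of_mem_erase hyb)
    _ ≤ deg2 E x := card_le_card fun y hy => by
        obtain ⟨f, hf, hyf⟩ := mem_biUnion.1 hy
        exact mem_filter.2 ⟨mem_univ y, ne_of_mem_erase hyf, f, hAE hf, hA f hf,
          mem_of_mem_erase hyf⟩

theorem Linear.card_largeNeighborsThrough_add_one_mul_le (hlin : Linear E) {e : Finset V}
    (he : e ∈ E) {x : V} (hx : x ∈ e) :
    (#(largeNeighborsThrough E e x) + 1) * (e.card - 1) ≤ maxDeg2 E := by
  set K := largeNeighborsThrough E e x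
  have hstar := hlin.sum_card_sub_one_le_deg2 (A := insert e K)
    (insert_subset he (filter_subset _ _))
    (forall_mem_insert _ _ _ |>.2 ⟨hx, fun f hf => (mem_filter.1 hf).2.1⟩)
  rw [sum_insert fun h => (mem_filter.1 h).2.2.1 rfl] at hstar
  have hK : #K * (e.card - 1) ≤ ∑ f ∈ K, (f.card - 1) := by
    simpa using card_nsmul_le_sum K (fun f => f.card - 1) _
      fun f hf => Nat.sub_le_sub_right (mem_filter.1 hf).2.2.2 1
  linarith [deg2_le_maxDeg2 E x]

theorem Linear.card_largeNeighbors_add_card_mul_le (hlin : Linear E) {e : Finset V} (he : e ∈ E) :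
    (#(largeNeighbors E e) + e.card) * (e.card - 1) ≤ e.card * maxDeg2 E := by
  calc (#(largeNeighbors E e) + e.card) * (e.card - 1)
      = ∑ x ∈ e, (#(largeNeighborsThrough E e x) + 1) * (e.card - 1) := by
        rw [hlin.card_largeNeighbors he, ← sum_mul, sum_add_distrib, card_eq_sum_ones e]
    _ ≤ ∑ x ∈ e, maxDeg2 E := sum_le_sum fun x hx =>
        hlin.card_largeNeighborsThrough_add_one_mul_le he hx
    _ = e.card * maxDeg2 E := by rw [sum_const, smul_eq_mul]

theorem Linear.card_largeNeighbors_le_of_hyperDeg_le (hlin : Linear E) {e : Finset V}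
    (he : e ∈ E) (he2 : 2 ≤ e.card) {x₀ : V} (hx₀ : x₀ ∈ e) (hdeg : hyperDeg E x₀ ≤ e.card) :
    #(largeNeighbors E e) ≤ maxDeg2 E := by
  have hK : ∀ x ∈ e, (#(largeNeighborsThrough E e x) + 1) * (e.card - 1) ≤ maxDeg2 E :=
    fun x hx => hlin.card_largeNeighborsThrough_add_one_mul_le he hx
  -- at `x₀` the degree bound beats the `2`-section bound
  have hK₀ : #(largeNeighborsThrough E e x₀) ≤ e.card - 1 := by
    have hsub : largeNeighborsThrough E e x₀ ⊆ ({g ∈ E | x₀ ∈ g}).erase e := fun g hg => by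
      obtain ⟨hgE, hx₀g, hge, -⟩ := mem_filter.1 hg
      exact mem_erase.2 ⟨hge, mem_filter.2 ⟨hgE, hx₀g⟩⟩
    have := card_le_card hsub
    rw [card_erase_of_mem (mem_filter.2 ⟨he, hx₀⟩)] at this
    exact this.trans (Nat.sub_le_sub_right hdeg 1)
  have hD : e.card - 1 ≤ maxDeg2 E :=
    (hK x₀ hx₀).trans' (Nat.le_mul_of_pos_left _ (Nat.succ_pos _))
  refine Nat.le_of_mul_le_mul_left ?_ (by omega : 0 < e.card - 1)
  calc (e.card - 1) * #(largeNeighbors E e)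
      = (e.card - 1) * #(largeNeighborsThrough E e x₀) +
          ∑ x ∈ e.erase x₀, (e.card - 1) * #(largeNeighborsThrough E e x) := by
        rw [hlin.card_largeNeighbors he, mul_sum, ← add_sum_erase _ _ hx₀]
    _ ≤ (e.card - 1) * (e.card - 1) + ∑ x ∈ e.erase x₀, (maxDeg2 E - (e.card - 1)) := by
        gcongr with x hx
        have := hK x (mem_of_mem_erase hx)
        rw [add_one_mul, mul_comm] at this
        omega
    _ = (e.card - 1) * maxDeg2 E := by
        rw [sum_const, card_erase_of_mem hx₀, smul_eq_mul, ← mul_add, Nat.add_sub_cancel' hD]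

theorem Linear.card_largeNeighborsThrough_eq_of_maxDeg2_lt (hlin : Linear E) (hr : r ∈ E)
    (hr2 : 2 ≤ r.card) (hn : Fintype.card V ≤ r.card ^ 2)
    (hT : maxDeg2 E < #(largeNeighbors E r)) :
    maxDeg2 E + 1 = r.card ^ 2 ∧ Fintype.card V = r.card ^ 2 ∧
      ∀ x ∈ r, #(largeNeighborsThrough E r x) = r.card := by
  have hsq : (r.card + 1) * (r.card - 1) = r.card ^ 2 - 1 := by
    simpa using (Nat.sq_sub_sq r.card 1).symm
  have hkD : r.card ^ 2 ≤ maxDeg2 E + 1 := by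
    have := (Nat.mul_le_mul_right (r.card - 1)
      (by omega : maxDeg2 E + 1 + r.card ≤ #(largeNeighbors E r) + r.card)).trans
      (hlin.card_largeNeighbors_add_card_mul_le hr)
    obtain ⟨m, hm⟩ : ∃ m, r.card = m + 2 := ⟨r.card - 2, by omega⟩
    rw [hm, show m + 2 - 1 = m + 1 by omega] at this
    rw [hm]
    nlinarith
  have hDn := maxDeg2_le_card_sub_one E
  have hk2 : 2 ^ 2 ≤ r.card ^ 2 := Nat.pow_le_pow_left hr2 2
  have hD : maxDeg2 E + 1 = r.card ^ 2 := by omega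
  refine ⟨hD, by omega, ?_⟩
  have hle : ∀ x ∈ r, #(largeNeighborsThrough E r x) ≤ r.card := fun x hx => by
    have := hlin.card_largeNeighborsThrough_add_one_mul_le hr hx
    rw [show maxDeg2 E = (r.card + 1) * (r.card - 1) by omega] at this
    exact Nat.le_of_add_le_add_right (Nat.le_of_mul_le_mul_right this (by omega))
  refine (sum_eq_sum_iff_of_le hle).1 (le_antisymm (sum_le_sum hle) ?_)
  rw [sum_const, smul_eq_mul, ← hlin.card_largeNeighbors hr, ← sq]
  omega

theorem Linear.isFullPencil (hlin : Linear E) (hloop : ∀ e ∈ E, 2 ≤ e.card) (hr : r ∈ E)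
    (hD : maxDeg2 E + 1 = r.card ^ 2) (hn : Fintype.card V = r.card ^ 2) {x : V}
    (hx : x ∈ r) (hK : #(largeNeighborsThrough E r x) = r.card) : IsFullPencil E r.card x := by
  set star := {g ∈ E | x ∈ g}
  set A := insert r (largeNeighborsThrough E r x)
  have hk : 1 ≤ r.card := card_pos.2 ⟨x, hx⟩
  have hsq : (r.card + 1) * (r.card - 1) = r.card ^ 2 - 1 := by
    simpa using (Nat.sq_sub_sq r.card 1).symm
  have hrK : r ∉ largeNeighborsThrough E r x := fun h => (mem_filter.1 h).2.2.1 rfl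
  have hAstar : A ⊆ star := insert_subset (mem_filter.2 ⟨hr, hx⟩) fun g hg =>
    mem_filter.2 ⟨(mem_filter.1 hg).1, (mem_filter.1 hg).2.1⟩
  have hlow : ∀ f ∈ A, r.card - 1 ≤ f.card - 1 := forall_mem_insert _ _ _ |>.2
    ⟨le_rfl, fun f hf => Nat.sub_le_sub_right (mem_filter.1 hf).2.2.2 1⟩
  have hstar : ∑ f ∈ star, (f.card - 1) ≤ deg2 E x :=
    hlin.sum_card_sub_one_le_deg2 (filter_subset _ _) fun f hf => (mem_filter.1 hf).2
  have hdeg := deg2_le_maxDeg2 E x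
  have hAconst : ∑ f ∈ A, (r.card - 1) = maxDeg2 E := by
    rw [sum_const, card_insert_of_notMem hrK, hK, smul_eq_mul]
    omega
  -- the edges of `A` alone already saturate the `2`-section degree of `x`
  have hAstar_sum : ∑ f ∈ A, (f.card - 1) ≤ ∑ f ∈ star, (f.card - 1) :=
    sum_le_sum_of_subset hAstar
  have hA_eq : ∑ f ∈ A, (r.card - 1) = ∑ f ∈ A, (f.card - 1) :=
    le_antisymm (sum_le_sum hlow) (by omega)
  have hAstar_eq : A = star := by
    by_contra hne
    obtain ⟨g, hg, hgA⟩ := exists_of_ssubset (ssubset_of_subset_of_ne hAstar hne)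
    have : ∑ f ∈ A, (f.card - 1) < ∑ f ∈ star, (f.card - 1) := sum_lt_sum_of_subset hAstar hg hgA
      (by have := hloop g (mem_filter.1 hg).1; omega) fun _ _ _ => Nat.zero_le _
    omega
  have hcard : ∀ g ∈ E, x ∈ g → g.card = r.card := fun g hg hxg => by
    have hgA : g ∈ A := hAstar_eq ▸ mem_filter.2 ⟨hg, hxg⟩
    have h₁ : r.card - 1 = g.card - 1 := (sum_eq_sum_iff_of_le hlow).1 hA_eq g hgA
    have h₂ := hloop g hg
    omega
  refine ⟨hcard, ?_, fun y hyx => exists_mem_mem_of_card_sub_one_le_deg2 ?_ hyx⟩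
  · change #star = _
    rw [← hAstar_eq, card_insert_of_notMem hrK, hK]
  · rw [← hAstar_eq] at hstar
    omega

theorem Linear.card_le_of_isFullPencil (hlin : Linear E) (hr : r ∈ E)
    (hD : maxDeg2 E + 1 = r.card ^ 2) (hpen : ∀ x ∈ r, IsFullPencil E r.card x)
    {g : Finset V} (hg : g ∈ E) : g.card ≤ r.card := by
  by_cases hgr : (g ∩ r).Nonempty
  · exact (card_eq_of_isFullPencil hpen hg hgr).le
  rcases g.eq_empty_or_nonempty with rfl | ⟨y, hy⟩
  · simp
  have hyr : y ∉ r := fun h => hgr ⟨y, mem_inter.2 ⟨hy, h⟩⟩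
  set F := {f ∈ E | y ∈ f ∧ (f ∩ r).Nonempty}
  -- each point of `r` is joined to `y` by an edge of `F`, which meets `r` only there
  have hF : r.card ≤ #F :=
    calc r.card ≤ #(F.biUnion (· ∩ r)) := card_le_card fun x hx => by
          obtain ⟨f, hf, hxf, hyf⟩ := (hpen x hx).exists_mem y fun h => hyr (h ▸ hx)
          exact mem_biUnion.2 ⟨f, mem_filter.2 ⟨hf, hyf, x, mem_inter.2 ⟨hxf, hx⟩⟩,
            mem_inter.2 ⟨hxf, hx⟩⟩
      _ ≤ ∑ f ∈ F, #(f ∩ r) := card_biUnion_le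
      _ ≤ ∑ f ∈ F, 1 := sum_le_sum fun f hf =>
          hlin f (mem_filter.1 hf).1 r hr fun h => hyr (h ▸ (mem_filter.1 hf).2.1)
      _ = #F := (card_eq_sum_ones F).symm
  have hstar := hlin.sum_card_sub_one_le_deg2 (A := insert g F)
    (insert_subset hg (filter_subset _ _))
    (forall_mem_insert _ _ _ |>.2 ⟨hy, fun f hf => (mem_filter.1 hf).2.1⟩)
  rw [sum_insert fun h => hgr (mem_filter.1 h).2.2, sum_congr rfl fun f hf => by
    rw [card_eq_of_isFullPencil hpen (mem_filter.1 hf).1 (mem_filter.1 hf).2.2],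
    sum_const, smul_eq_mul] at hstar
  have hdeg := deg2_le_maxDeg2 E y
  have hk : 1 ≤ r.card := Nat.one_le_iff_ne_zero.2 fun h => by simp [h] at hD
  have hsq : r.card * (r.card - 1) + (r.card - 1) + 1 = r.card ^ 2 := by
    obtain ⟨m, hm⟩ : ∃ m, r.card = m + 1 := ⟨r.card - 1, by omega⟩
    rw [hm, Nat.add_sub_cancel]; ring
  have := Nat.mul_le_mul_right (r.card - 1) hF
  omega

theorem Linear.card_largeNeighbors_le_of_card_eq (hlin : Linear E) (hr2 : 2 ≤ r.card)
    (hD : maxDeg2 E + 1 = r.card ^ 2) {e : Finset V} (he : e ∈ E) (hek : e.card = r.card) :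
    #(largeNeighbors E e) ≤ maxDeg2 E + 1 := by
  have hsq : (r.card + 1) * (r.card - 1) = r.card ^ 2 - 1 := by
    simpa using (Nat.sq_sub_sq r.card 1).symm
  have := hlin.card_largeNeighbors_add_card_mul_le he
  rw [hek, show maxDeg2 E = (r.card + 1) * (r.card - 1) by omega, ← mul_assoc] at this
  have := Nat.le_of_mul_le_mul_right this (by omega)
  have : r.card * (r.card + 1) = r.card ^ 2 + r.card := by ring
  omega

/-- Edges are coloured by decreasing size and, among edges of equal size, those farther from `r`
first. -/
def coloringKey (r g : Finset V) : ℕ ×ₗ ℕ :=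
  toLex (g.card, #(g \ r))

theorem Linear.exists_subset_largeNeighbors_coloringKey_lt (hlin : Linear E) (hr : r ∈ E)
    (hr2 : 2 ≤ r.card) (hpen : ∀ x ∈ r, IsFullPencil E r.card x) {e : Finset V} (he : e ∈ E)
    (hek : e.card = r.card) (her : e ≠ r) :
    ∃ A ⊆ largeNeighbors E e, (r ∈ A ∨ 1 < #A) ∧ ∀ g ∈ A, coloringKey r g < coloringKey r e := by
  have hkey : ∀ g, g.card = e.card → #(g \ r) < #(e \ r) → coloringKey r g < coloringKey r e :=
    fun g h₁ h₂ => Prod.Lex.toLex_lt_toLex.2 (.inr ⟨h₁, h₂⟩)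
  by_cases hem : (e ∩ r).Nonempty
  · refine ⟨{r}, singleton_subset_iff.2 ?_, .inl (mem_singleton_self r), ?_⟩
    · exact mem_filter.2 ⟨hr, ⟨Ne.symm her, by rwa [inter_comm]⟩, hek.le⟩
    simp only [mem_singleton, forall_eq]
    refine hkey r hek.symm ?_
    have := card_sdiff_add_card_inter e r
    have := hlin e he r hr her
    rw [sdiff_self, bot_eq_empty, card_empty]
    omega
  have her' : Disjoint e r := by rwa [← not_disjoint_iff_nonempty_inter, not_not] at hem
  obtain ⟨p₁, hp₁, p₂, hp₂, hp₁₂, hp₁e, hp₂e, hp₁r, hp₂r⟩ :=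
    hlin.exists_two_meeting_of_isFullPencil hr hr2 hpen (card_pos.1 (by omega)) her'
  have hlater : ∀ p ∈ E, (p ∩ e).Nonempty → (p ∩ r).Nonempty →
      p ∈ largeNeighbors E e ∧ coloringKey r p < coloringKey r e := fun p hp hpe hpr => by
    have hpk := (card_eq_of_isFullPencil hpen hp hpr).trans hek.symm
    refine ⟨mem_filter.2 ⟨hp, ⟨?_, hpe⟩, hpk.ge⟩, hkey p hpk ?_⟩
    · rintro rfl
      exact hem hpr
    · have := card_sdiff_add_card_inter p r
      have := card_pos.2 hpr
      rw [sdiff_eq_self_of_disjoint her']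
      omega
  refine ⟨{p₁, p₂}, insert_subset (hlater p₁ hp₁ hp₁e hp₁r).1
    (singleton_subset_iff.2 (hlater p₂ hp₂ hp₂e hp₂r).1), .inr (by simp [hp₁₂]), ?_⟩
  simp only [mem_insert, mem_singleton, forall_eq_or_imp, forall_eq]
  exact ⟨(hlater p₁ hp₁ hp₁e hp₁r).2, (hlater p₂ hp₂ hp₂e hp₂r).2⟩

theorem Linear.colorableWith_of_isFullPencil (hlin : Linear E) (hr : r ∈ E) (hr2 : 2 ≤ r.card)
    (hD : maxDeg2 E + 1 = r.card ^ 2) (hpen : ∀ x ∈ r, IsFullPencil E r.card x)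
    (hsmall : ∀ e ∈ E, e.card < r.card → #(largeNeighbors E e) ≤ maxDeg2 E) :
    ColorableWith E (maxDeg2 E + 1) := by
  obtain ⟨f₁, hf₁, f₂, hf₂, hf₁₂, hf₁r, hf₂r, hf₁m, hf₂m⟩ :=
    hlin.exists_disjoint_of_isFullPencil hr hr2 hpen
  set P : Finset (Finset V) := {f₁, f₂}
  have hPE : P ⊆ E := insert_subset hf₁ (singleton_subset_iff.2 hf₂)
  have hPindep : ∀ a ∈ P, ∀ b ∈ P, ¬(intersectionGraph V).Adj a b := by
    simp only [P, mem_insert, mem_singleton, intersectionGraph_adj]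
    rintro a (rfl | rfl) b (rfl | rfl) ⟨hab, hint⟩
    exacts [hab rfl, not_disjoint_iff_nonempty_inter.2 hint hf₁₂,
      not_disjoint_iff_nonempty_inter.2 hint hf₁₂.symm, hab rfl]
  rw [colorableWith_iff]
  refine (intersectionGraph V).exists_coloring_of_earlierNeighbors hPE hPindep (coloringKey r)
    (Nat.succ_pos _) fun e he => ?_
  obtain ⟨heE, heP⟩ := mem_sdiff.1 he
  have hek := hlin.card_le_of_isFullPencil hr hD hpen heE
  have hNT := earlierNeighbors_subset_largeNeighbors (E := E) (P := P) (key := coloringKey r)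
    (e := e)
    (fun g h => (Prod.Lex.toLex_le_toLex.1 h).elim le_of_lt fun h => h.1.le) <| by
      simp only [P, mem_insert, mem_singleton, forall_eq_or_imp, forall_eq]
      rw [card_eq_of_isFullPencil hpen hf₁ hf₁m, card_eq_of_isFullPencil hpen hf₂ hf₂m]
      exact ⟨hek, hek⟩
  rcases hek.lt_or_eq with hek | hek
  · exact .inl (Nat.lt_succ_of_le ((card_le_card hNT).trans (hsmall e heE hek)))
  refine (intersectionGraph V).card_earlierNeighbors_lt_or hPE hNT
    (hlin.card_largeNeighbors_le_of_card_eq hr2 hD heE hek) ?_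
  by_cases her : e = r
  · subst her
    refine .inr ⟨f₁, by simp [P], f₂, by simp [P], ?_, ⟨hf₁r, hf₁m⟩, ⟨hf₂r, hf₂m⟩⟩
    rintro rfl
    obtain ⟨x, hx⟩ := hf₁m
    exact disjoint_left.1 hf₁₂ (mem_inter.1 hx).1 (mem_inter.1 hx).1
  -- the edges of `A` are coloured after `e`, unless they lie in `P`
  obtain ⟨A, hAT, hA, hAkey⟩ :=
    hlin.exists_subset_largeNeighbors_coloringKey_lt hr hr2 hpen heE hek her
  by_cases hAP : A ⊆ P
  · have hrA : r ∉ A := fun h => by simpa [P, hf₁r.symm, hf₂r.symm] using hAP h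
    obtain ⟨a, ha, b, hb, hab⟩ := one_lt_card.1 (hA.resolve_left hrA)
    exact .inr ⟨a, hAP ha, b, hAP hb, hab, (mem_filter.1 (hAT ha)).2.1, (mem_filter.1 (hAT hb)).2.1⟩
  obtain ⟨g, hgA, hgP⟩ := not_subset.1 hAP
  exact .inl ⟨g, hAT hgA, hgP, hAkey g hgA⟩

end TwoSection

theorem stmt19_general {V : Type*} [Fintype V] [DecidableEq V]
    (E E' E'' : Finset (Finset V)) (n : ℕ) (hn : n = Fintype.card V)
    (hlin : Linear E) (hloop : ∀ e ∈ E, 2 ≤ e.card)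
    (hunion : E = E' ∪ E'')
    (h1 : ∀ e ∈ E', n ≤ e.card ^ 2)
    (h3 : ∀ e ∈ E'', ∃ x ∈ e, hyperDeg E x ≤ e.card) :
    chromIndex E ≤ maxDeg2 E + 1 := by
  subst hn
  refine Nat.sInf_le ?_
  have hE'' : ∀ e ∈ E'', #(largeNeighbors E e) ≤ maxDeg2 E := fun e he => by
    have heE : e ∈ E := hunion ▸ mem_union_right E' he
    obtain ⟨x, hx, hdeg⟩ := h3 e he
    exact hlin.card_largeNeighbors_le_of_hyperDeg_le heE (hloop e heE) hx hdeg
  by_cases hloose : ∀ e ∈ E, #(largeNeighbors E e) ≤ maxDeg2 E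
  · exact colorableWith_succ_of_card_largeNeighbors_le hloose
  obtain ⟨r, hr, hrT⟩ : ∃ r ∈ E, maxDeg2 E < #(largeNeighbors E r) := by simpa using hloose
  have hrE' : r ∈ E' :=
    (mem_union.1 (hunion ▸ hr)).resolve_right fun h => (hE'' r h).not_gt hrT
  obtain ⟨hD, hcard, hK⟩ :=
    hlin.card_largeNeighborsThrough_eq_of_maxDeg2_lt hr (hloop r hr) (h1 r hrE') hrT
  refine hlin.colorableWith_of_isFullPencil hr (hloop r hr) hD
    (fun x hx => hlin.isFullPencil hloop hr hD hcard hx (hK x hx)) fun e he hek => hE'' e ?_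
  refine (mem_union.1 (hunion ▸ he)).resolve_left fun he' => ?_
  have := h1 e he'
  have := Nat.pow_lt_pow_left hek two_ne_zero
  omega

theorem stmt19 {V : Type*} [Fintype V] [DecidableEq V]
    (E E' E'' : Finset (Finset V)) (n : ℕ) (hn : n = Fintype.card V)
    (hlin : Linear E) (hloop : ∀ e ∈ E, 2 ≤ e.card)
    (hunion : E = E' ∪ E'') (hdisj : Disjoint E' E'')
    (h1 : ∀ e ∈ E', n ≤ e.card ^ 2)
    (h2 : ∀ e ∈ E'', e.card ^ 2 < n)
    (h3 : ∀ e ∈ E'', ∃ x ∈ e, hyperDeg E x ≤ e.card) :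
    chromIndex E ≤ maxDeg2 E + 1 :=
  stmt19_general E E' E'' n hn hlin hloop hunion h1 h3
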